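/- Let q be a prime power and let ℓ₁, ℓ₂, ℓ₃ be three distinct lines of PG(2,q) not all passing through a common point (a triangle), and let S = ℓ₁ ∪ ℓ₂ ∪ ℓ₃. Then #S = 3q, and every point Q ∈ PG(2,q) \ S lies on exactly 3(q−1) unordered pairs of distinct points of S collinear with Q; hence S is a (1, 3(q−1))-OS set. -/
import Mathlib

open Module

/-- Points of `PG(N,q)`: 1-dimensional subspaces of `F^(N+1)`. -/
abbrev PGPoint (F : Type) [Field F] (N : ℕ) :=
  {W : Submodule F (Fin (N + 1) → F) // Module.finrank F W = 1}

/-- Lines of `PG(N,q)`: 2-dimensional subspaces of `F^(N+1)`. -/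
abbrev PGLine (F : Type) [Field F] (N : ℕ) :=
  {W : Submodule F (Fin (N + 1) → F) // Module.finrank F W = 2}

/-- The number of points of `S` lying on the line `L`. -/
noncomputable def lineCount {F : Type} [Field F] {N : ℕ}
    (S : Set (PGPoint F N)) (L : PGLine F N) : ℕ :=
  {P : PGPoint F N | P ∈ S ∧ P.1 ≤ L.1}.ncard

/-- The number of unordered pairs of distinct points of `S` collinear with `Q`
(the number of secants of `S` through `Q`, counted with multiplicity). -/
noncomputable def pairCount {F : Type} [Field F] {N : ℕ}
    (S : Set (PGPoint F N)) (Q : PGPoint F N) : ℕ :=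
  {e : Set (PGPoint F N) |
    ∃ A ∈ S, ∃ B ∈ S, A ≠ B ∧ e = {A, B} ∧ Q.1 ≤ A.1 ⊔ B.1}.ncard

/-- `S` spans (generates) `PG(N,q)`. -/
def Spans {F : Type} [Field F] {N : ℕ} (S : Set (PGPoint F N)) : Prop :=
  (⨆ P ∈ S, P.1) = ⊤

/-- `S` is a `(1,μ)`-saturating set. -/
def IsSaturating {F : Type} [Field F] {N : ℕ} (S : Set (PGPoint F N)) (μ : ℕ) : Prop :=
  Spans S ∧ S ≠ Set.univ ∧ ∀ Q : PGPoint F N, Q ∉ S → μ ≤ pairCount S Q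

/-- `S` is an optimal `(1,μ)`-saturating set (`(1,μ)`-OS set). -/
def IsOS {F : Type} [Field F] {N : ℕ} (S : Set (PGPoint F N)) (μ : ℕ) : Prop :=
  Spans S ∧ S ≠ Set.univ ∧ ∀ Q : PGPoint F N, Q ∉ S → pairCount S Q = μ

/-- `S` is a minimal `(1,μ)`-saturating set: no proper subset is `(1,μ)`-saturating. -/
def IsMinimalSaturating {F : Type} [Field F] {N : ℕ} (S : Set (PGPoint F N)) (μ : ℕ) : Prop :=
  IsSaturating S μ ∧ ∀ T : Set (PGPoint F N), T ⊂ S → ¬ IsSaturating T μ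

/-! ### Auxiliary counting lemmas -/

lemma ncard_eq_sum_fiber {α β : Type*} {s : Set α} {t : Set β} (hs : s.Finite) (ht : t.Finite)
    (f : α → β) (hf : ∀ a ∈ s, f a ∈ t) :
    s.ncard = ∑ b ∈ ht.toFinset, {a ∈ s | f a = b}.ncard := by
  classical
  rw [Set.ncard_eq_toFinset_card _ hs,
    Finset.card_eq_sum_card_fiberwise (t := ht.toFinset) (f := f)
      (fun a ha => ht.mem_toFinset.2 (hf a (hs.mem_toFinset.1 ha)))]
  refine Finset.sum_congr rfl fun b _ => ?_
  rw [Set.ncard_eq_toFinset_card _ (hs.subset (Set.sep_subset _ _))]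
  congr 1
  ext a
  simp [Set.Finite.mem_toFinset]

lemma ncard_eq_mul_of_fiber_const {α β : Type*} {s : Set α} {t : Set β} (hs : s.Finite)
    (ht : t.Finite) (f : α → β) (hf : ∀ a ∈ s, f a ∈ t) (k : ℕ)
    (hfib : ∀ b ∈ t, {a ∈ s | f a = b}.ncard = k) :
    s.ncard = t.ncard * k := by
  rw [ncard_eq_sum_fiber hs ht f hf,
    Finset.sum_congr rfl (fun b hb => hfib b (ht.mem_toFinset.1 hb)),
    Finset.sum_const, smul_eq_mul, Set.ncard_eq_toFinset_card _ ht]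

/-! ### Basic geometry of `PG(2,q)` -/

section Geometry

variable {F : Type} [Field F]

lemma finrank_V : finrank F (Fin (2+1) → F) = 2+1 := by simp

lemma point_eq_of_le {P Q : PGPoint F 2} (h : P.1 ≤ Q.1) : P = Q :=
  Subtype.ext (Submodule.eq_of_le_of_finrank_eq h (by rw [P.2, Q.2]))

lemma inf_points_eq_bot {A B : PGPoint F 2} (h : A ≠ B) : A.1 ⊓ B.1 = ⊥ := by
  by_contra hne
  have h1 : finrank F ↥(A.1 ⊓ B.1) ≤ finrank F ↥(A.1) := Submodule.finrank_mono inf_le_left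
  rw [A.2] at h1
  have h0 : finrank F ↥(A.1 ⊓ B.1) ≠ 0 := fun h0 => hne (Submodule.finrank_eq_zero.mp h0)
  have hr : finrank F ↥(A.1 ⊓ B.1) = 1 := by omega
  have e1 : A.1 ⊓ B.1 = A.1 := Submodule.eq_of_le_of_finrank_eq inf_le_left (by rw [hr, A.2])
  exact h (point_eq_of_le (e1 ▸ inf_le_right))

lemma sup_points_rank {A B : PGPoint F 2} (h : A ≠ B) : finrank F ↥(A.1 ⊔ B.1) = 2 := by
  have := Submodule.finrank_sup_add_finrank_inf_eq A.1 B.1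
  rw [inf_points_eq_bot h, finrank_bot, A.2, B.2] at this
  omega

/-- two distinct points on a line span it. -/
lemma line_eq_sup {L : PGLine F 2} {A B : PGPoint F 2} (hA : A.1 ≤ L.1) (hB : B.1 ≤ L.1)
    (hAB : A ≠ B) : L.1 = A.1 ⊔ B.1 :=
  (Submodule.eq_of_le_of_finrank_eq (sup_le hA hB) (by rw [sup_points_rank hAB, L.2])).symm

/-- two distinct points lie on at most one line. -/
lemma line_eq_line {N l : PGLine F 2} {P P' : PGPoint F 2} (hPP' : P ≠ P')
    (h1 : P.1 ≤ N.1) (h2 : P'.1 ≤ N.1) (h3 : P.1 ≤ l.1) (h4 : P'.1 ≤ l.1) : N = l :=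
  Subtype.ext ((line_eq_sup h1 h2 hPP').trans (line_eq_sup h3 h4 hPP').symm)

lemma sup_lines_eq_top {l m : PGLine F 2} (h : l ≠ m) : l.1 ⊔ m.1 = ⊤ := by
  have hle : finrank F ↥(l.1 ⊔ m.1) ≤ 2+1 := le_trans (Submodule.finrank_le _) (by simp)
  have h2 : finrank F ↥(l.1) ≤ finrank F ↥(l.1 ⊔ m.1) := Submodule.finrank_mono le_sup_left
  rw [l.2] at h2
  rcases Nat.lt_or_ge (finrank F ↥(l.1 ⊔ m.1)) 3 with hlt | hge
  · exfalso
    have e1 : l.1 = l.1 ⊔ m.1 := Submodule.eq_of_le_of_finrank_eq le_sup_left (by omega)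
    have hml : m.1 ≤ l.1 := e1 ▸ le_sup_right
    exact h (Subtype.ext (Submodule.eq_of_le_of_finrank_eq hml (by rw [m.2, l.2])).symm)
  · exact Submodule.eq_top_of_finrank_eq (by rw [finrank_V]; omega)

lemma inf_lines_rank {l m : PGLine F 2} (h : l ≠ m) : finrank F ↥(l.1 ⊓ m.1) = 1 := by
  have hs := Submodule.finrank_sup_add_finrank_inf_eq l.1 m.1
  rw [sup_lines_eq_top h, l.2, m.2] at hs
  have ht : finrank F (⊤ : Submodule F (Fin (2+1) → F)) = 2+1 := by
    rw [finrank_top]; exact finrank_V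
  omega

/-- the meet point of two distinct lines. -/
noncomputable def meet (l m : PGLine F 2) (h : l ≠ m) : PGPoint F 2 :=
  ⟨l.1 ⊓ m.1, inf_lines_rank h⟩

lemma eq_meet {l m : PGLine F 2} (h : l ≠ m) {P : PGPoint F 2} (hl : P.1 ≤ l.1)
    (hm : P.1 ≤ m.1) : P = meet l m h :=
  point_eq_of_le (le_inf hl hm)

lemma meet_le_left {l m : PGLine F 2} (h : l ≠ m) : (meet l m h).1 ≤ l.1 := inf_le_left
lemma meet_le_right {l m : PGLine F 2} (h : l ≠ m) : (meet l m h).1 ≤ m.1 := inf_le_right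

/-- a line is contained in the span of any set containing all its points -/
lemma line_le_iSup {S : Set (PGPoint F 2)} {l : PGLine F 2}
    (h : ∀ P : PGPoint F 2, P.1 ≤ l.1 → P ∈ S) : l.1 ≤ ⨆ P ∈ S, P.1 := by
  intro v hv
  by_cases hv0 : v = 0
  · simp [hv0]
  · have hP : (⟨Submodule.span F {v}, finrank_span_singleton hv0⟩ : PGPoint F 2) ∈ S :=
      h _ (Submodule.span_le.2 (Set.singleton_subset_iff.2 hv))
    exact le_iSup₂ (f := fun (P : PGPoint F 2) (_ : P ∈ S) => P.1) _ hP
      (Submodule.mem_span_singleton_self v)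

end Geometry

section Counting

variable {F : Type} [Field F] [Fintype F]

instance : Finite (Submodule F (Fin (2+1) → F)) :=
  Finite.of_injective (fun W => (W : Set (Fin (2+1) → F))) SetLike.coe_injective

/-- counting nonzero vectors in a submodule. -/
lemma ncard_submodule_aux (W : Submodule F (Fin (2+1) → F)) :
    ((W : Set (Fin (2+1) → F)) \ {0}).ncard + 1 = Fintype.card F ^ finrank F ↥W := by
  have : Fintype ↥W := Fintype.ofFinite _
  have h0 : (0 : Fin (2+1) → F) ∈ (W : Set (Fin (2+1) → F)) := W.zero_mem
  have hc : (W : Set (Fin (2+1) → F)).ncard = Fintype.card F ^ finrank F ↥W := by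
    rw [← Nat.card_coe_set_eq, Nat.card_eq_fintype_card]
    exact card_eq_pow_finrank (K := F)
  rw [Set.ncard_diff_singleton_of_mem h0, ← hc]
  have : 1 ≤ (W : Set (Fin (2+1) → F)).ncard := by
    rw [Nat.one_le_iff_ne_zero]
    intro h
    rw [Set.ncard_eq_zero] at h
    exact (h ▸ h0 : (0:Fin (2+1) → F) ∈ (∅ : Set _))
  omega

/-- every line of `PG(2,q)` has exactly `q+1` points. -/
lemma card_points_on_line (L : PGLine F 2) :
    {P : PGPoint F 2 | P.1 ≤ L.1}.ncard = Fintype.card F + 1 := by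
  classical
  set q := Fintype.card F with hq
  have hq2 : 2 ≤ q := Fintype.one_lt_card
  set V := Fin (2+1) → F
  set T : Set (PGPoint F 2) := {P : PGPoint F 2 | P.1 ≤ L.1} with hT
  set T' : Set (Submodule F V) := {W | finrank F ↥W = 1 ∧ W ≤ L.1} with hT'
  have hTT' : T' = Subtype.val '' T := by
    ext W
    constructor
    · rintro ⟨h1, h2⟩; exact ⟨⟨W, h1⟩, h2, rfl⟩
    · rintro ⟨P, hP, rfl⟩; exact ⟨P.2, hP⟩
  have hcard_eq : T'.ncard = T.ncard := by
    rw [hTT', Set.ncard_image_of_injective T Subtype.val_injective]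
  set s : Set V := (L.1 : Set V) \ {0} with hs
  have hmain : s.ncard = T'.ncard * (q - 1) := by
    refine ncard_eq_mul_of_fiber_const (Set.toFinite _) (Set.toFinite _)
      (fun v => Submodule.span F {v}) ?_ _ ?_
    · rintro v ⟨hvL, hv0⟩
      simp only [Set.mem_singleton_iff] at hv0
      exact ⟨finrank_span_singleton hv0, Submodule.span_le.2 (Set.singleton_subset_iff.2 hvL)⟩
    · rintro W ⟨hW1, hWL⟩
      have hfib : {a ∈ s | Submodule.span F {a} = W} = (W : Set V) \ {0} := by
        ext v
        constructor
        · rintro ⟨⟨_, hv0⟩, hspan⟩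
          exact ⟨hspan ▸ Submodule.mem_span_singleton_self v, hv0⟩
        · rintro ⟨hvW, hv0⟩
          simp only [Set.mem_singleton_iff] at hv0
          have hsp : Submodule.span F {v} = W :=
            Submodule.eq_of_le_of_finrank_eq
              (Submodule.span_le.2 (Set.singleton_subset_iff.2 hvW))
              (by rw [finrank_span_singleton hv0, hW1])
          exact ⟨⟨hWL hvW, hv0⟩, hsp⟩
      rw [hfib]
      have := ncard_submodule_aux W
      rw [hW1, pow_one, ← hq] at this
      omega
  have hsc : s.ncard = q ^ 2 - 1 := by
    have := ncard_submodule_aux L.1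
    rw [L.2, ← hq, ← hs] at this
    omega
  rw [← hcard_eq]
  obtain ⟨k, hk⟩ : ∃ k, q = k + 2 := ⟨q - 2, by omega⟩
  have hfact : q ^ 2 - 1 = (q + 1) * (q - 1) := by
    rw [hk, Nat.sub_eq_iff_eq_add (Nat.one_le_pow _ _ (by omega))]
    have h' : k + 2 - 1 = k + 1 := by omega
    rw [h']
    ring
  rw [hsc, hfact] at hmain
  have := Nat.eq_of_mul_eq_mul_right (show 0 < q - 1 by omega) hmain.symm
  omega

end Counting

/-! ### joins -/

section Join

variable {F : Type} [Field F]

/-- the line through two distinct points. -/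
noncomputable def join (A B : PGPoint F 2) (h : A ≠ B) : PGLine F 2 :=
  ⟨A.1 ⊔ B.1, sup_points_rank h⟩

lemma le_join_left {A B : PGPoint F 2} (h : A ≠ B) : A.1 ≤ (join A B h).1 := le_sup_left
lemma le_join_right {A B : PGPoint F 2} (h : A ≠ B) : B.1 ≤ (join A B h).1 := le_sup_right

lemma join_eq {L : PGLine F 2} {A B : PGPoint F 2} (h : A ≠ B) (hA : A.1 ≤ L.1)
    (hB : B.1 ≤ L.1) : L = join A B h :=
  Subtype.ext (line_eq_sup hA hB h)

end Join

/-! ### the triangle -/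

section Triangle

variable {F : Type} [Field F] [Fintype F]
variable {l₁ l₂ l₃ : PGLine F 2}

lemma S_ncard (h12 : l₁ ≠ l₂) (h13 : l₁ ≠ l₃) (h23 : l₂ ≠ l₃)
    (htri : ¬ ∃ G : PGPoint F 2, G.1 ≤ l₁.1 ∧ G.1 ≤ l₂.1 ∧ G.1 ≤ l₃.1) :
    {P : PGPoint F 2 | P.1 ≤ l₁.1 ∨ P.1 ≤ l₂.1 ∨ P.1 ≤ l₃.1}.ncard = 3 * Fintype.card F := by
  classical
  set q := Fintype.card F with hq
  have hq2 : 2 ≤ q := Fintype.one_lt_card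
  set T1 : Set (PGPoint F 2) := {P : PGPoint F 2 | P.1 ≤ l₁.1} with hT1
  set T2 : Set (PGPoint F 2) := {P : PGPoint F 2 | P.1 ≤ l₂.1} with hT2
  set T3 : Set (PGPoint F 2) := {P : PGPoint F 2 | P.1 ≤ l₃.1} with hT3
  have hu : {P : PGPoint F 2 | P.1 ≤ l₁.1 ∨ P.1 ≤ l₂.1 ∨ P.1 ≤ l₃.1} = T1 ∪ (T2 ∪ T3) := rfl
  have h23' := Set.ncard_union_add_ncard_inter T2 T3 (Set.toFinite _) (Set.toFinite _)
  have h1' := Set.ncard_union_add_ncard_inter T1 (T2 ∪ T3) (Set.toFinite _) (Set.toFinite _)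
  have hi23 : T2 ∩ T3 = {meet l₂ l₃ h23} := by
    ext P
    constructor
    · rintro ⟨hP2, hP3⟩
      exact eq_meet h23 hP2 hP3
    · rintro rfl
      exact ⟨meet_le_left _, meet_le_right _⟩
  have hi1 : T1 ∩ (T2 ∪ T3) = {meet l₁ l₂ h12, meet l₁ l₃ h13} := by
    ext P
    constructor
    · rintro ⟨hP1, hP2 | hP3⟩
      · exact Or.inl (eq_meet h12 hP1 hP2)
      · exact Or.inr (eq_meet h13 hP1 hP3)
    · rintro (rfl | rfl)
      · exact ⟨meet_le_left _, Or.inl (meet_le_right _)⟩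
      · exact ⟨meet_le_left _, Or.inr (meet_le_right _)⟩
  have hPne : meet l₁ l₂ h12 ≠ meet l₁ l₃ h13 := by
    intro h
    exact htri ⟨meet l₁ l₂ h12, meet_le_left _, meet_le_right _, by rw [h]; exact meet_le_right _⟩
  have hc1 : T1.ncard = q + 1 := card_points_on_line l₁
  have hc2 : T2.ncard = q + 1 := card_points_on_line l₂
  have hc3 : T3.ncard = q + 1 := card_points_on_line l₃
  rw [hi23, Set.ncard_singleton, hc2, hc3] at h23'
  rw [hi1, Set.ncard_pair hPne, hc1] at h1'
  rw [hu]
  omega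

end Triangle

section PairCount

variable {F : Type} [Field F] [Fintype F]

set_option maxHeartbeats 1000000 in
lemma pair_count_eq (l₁ l₂ l₃ : PGLine F 2)
    (h12 : l₁ ≠ l₂) (h13 : l₁ ≠ l₃) (h23 : l₂ ≠ l₃)
    (htri : ¬ ∃ G : PGPoint F 2, G.1 ≤ l₁.1 ∧ G.1 ≤ l₂.1 ∧ G.1 ≤ l₃.1)
    {Q : PGPoint F 2} (hQ1 : ¬ Q.1 ≤ l₁.1) (hQ2 : ¬ Q.1 ≤ l₂.1) (hQ3 : ¬ Q.1 ≤ l₃.1) :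
    pairCount {P : PGPoint F 2 | P.1 ≤ l₁.1 ∨ P.1 ≤ l₂.1 ∨ P.1 ≤ l₃.1} Q
      = 3 * (Fintype.card F - 1) := by
  classical
  set q := Fintype.card F with hq
  have hq2 : 2 ≤ q := Fintype.one_lt_card
  set S : Set (PGPoint F 2) := {P | P.1 ≤ l₁.1 ∨ P.1 ≤ l₂.1 ∨ P.1 ≤ l₃.1} with hSdef
  have hQS : Q ∉ S := by
    rintro (h | h | h)
    · exact hQ1 h
    · exact hQ2 h
    · exact hQ3 h
  -- vertices
  set P1 : PGPoint F 2 := meet l₂ l₃ h23 with hP1def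
  set P2 : PGPoint F 2 := meet l₁ l₃ h13 with hP2def
  set P3 : PGPoint F 2 := meet l₁ l₂ h12 with hP3def
  have hP1l2 : P1.1 ≤ l₂.1 := meet_le_left _
  have hP1l3 : P1.1 ≤ l₃.1 := meet_le_right _
  have hP2l1 : P2.1 ≤ l₁.1 := meet_le_left _
  have hP2l3 : P2.1 ≤ l₃.1 := meet_le_right _
  have hP3l1 : P3.1 ≤ l₁.1 := meet_le_left _
  have hP3l2 : P3.1 ≤ l₂.1 := meet_le_right _
  have hP1S : P1 ∈ S := Or.inr (Or.inl hP1l2)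
  have hP2S : P2 ∈ S := Or.inl hP2l1
  have hP3S : P3 ∈ S := Or.inl hP3l1
  have hQP1 : Q ≠ P1 := fun h => hQS (h ▸ hP1S)
  have hQP2 : Q ≠ P2 := fun h => hQS (h ▸ hP2S)
  have hQP3 : Q ≠ P3 := fun h => hQS (h ▸ hP3S)
  have hP12 : P1 ≠ P2 := fun h => htri ⟨P1, by rw [h]; exact hP2l1, hP1l2, hP1l3⟩
  have hP13 : P1 ≠ P3 := fun h => htri ⟨P1, by rw [h]; exact hP3l1, hP1l2, hP1l3⟩
  have hP23 : P2 ≠ P3 := fun h => htri ⟨P2, hP2l1, by rw [h]; exact hP3l2, hP2l3⟩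
  -- the three lines joining Q to the vertices
  set N1 : PGLine F 2 := join Q P1 hQP1 with hN1def
  set N2 : PGLine F 2 := join Q P2 hQP2 with hN2def
  set N3 : PGLine F 2 := join Q P3 hQP3 with hN3def
  have hQN1 : Q.1 ≤ N1.1 := le_join_left _
  have hQN2 : Q.1 ≤ N2.1 := le_join_left _
  have hQN3 : Q.1 ≤ N3.1 := le_join_left _
  have hP1N1 : P1.1 ≤ N1.1 := le_join_right _
  have hP2N2 : P2.1 ≤ N2.1 := le_join_right _
  have hP3N3 : P3.1 ≤ N3.1 := le_join_right _
  have hN1l1 : N1 ≠ l₁ := fun h => hQ1 (by rw [← h]; exact hQN1)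
  have hN1l2 : N1 ≠ l₂ := fun h => hQ2 (by rw [← h]; exact hQN1)
  have hN1l3 : N1 ≠ l₃ := fun h => hQ3 (by rw [← h]; exact hQN1)
  have hN2l1 : N2 ≠ l₁ := fun h => hQ1 (by rw [← h]; exact hQN2)
  have hN2l2 : N2 ≠ l₂ := fun h => hQ2 (by rw [← h]; exact hQN2)
  have hN2l3 : N2 ≠ l₃ := fun h => hQ3 (by rw [← h]; exact hQN2)
  have hN3l1 : N3 ≠ l₁ := fun h => hQ1 (by rw [← h]; exact hQN3)
  have hN3l2 : N3 ≠ l₂ := fun h => hQ2 (by rw [← h]; exact hQN3)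
  have hN3l3 : N3 ≠ l₃ := fun h => hQ3 (by rw [← h]; exact hQN3)
  -- the second points of S on the Ni
  set B1 : PGPoint F 2 := meet N1 l₁ hN1l1 with hB1def
  set B2 : PGPoint F 2 := meet N2 l₂ hN2l2 with hB2def
  set B3 : PGPoint F 2 := meet N3 l₃ hN3l3 with hB3def
  have hB1N1 : B1.1 ≤ N1.1 := meet_le_left _
  have hB2N2 : B2.1 ≤ N2.1 := meet_le_left _
  have hB3N3 : B3.1 ≤ N3.1 := meet_le_left _
  have hB1l1 : B1.1 ≤ l₁.1 := meet_le_right _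
  have hB2l2 : B2.1 ≤ l₂.1 := meet_le_right _
  have hB3l3 : B3.1 ≤ l₃.1 := meet_le_right _
  have hB1S : B1 ∈ S := Or.inl hB1l1
  have hB2S : B2 ∈ S := Or.inr (Or.inl hB2l2)
  have hB3S : B3 ∈ S := Or.inr (Or.inr hB3l3)
  -- distinctness of the six special points
  have hB1P1 : B1 ≠ P1 := fun h => htri ⟨P1, by rw [← h]; exact hB1l1, hP1l2, hP1l3⟩
  have hB1P2 : B1 ≠ P2 :=
    fun h => hN1l3 (line_eq_line hP12.symm (by rw [← h]; exact hB1N1) hP1N1 hP2l3 hP1l3)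
  have hB1P3 : B1 ≠ P3 :=
    fun h => hN1l2 (line_eq_line hP13.symm (by rw [← h]; exact hB1N1) hP1N1 hP3l2 hP1l2)
  have hB2P1 : B2 ≠ P1 :=
    fun h => hN2l3 (line_eq_line hP12 (by rw [← h]; exact hB2N2) hP2N2 hP1l3 hP2l3)
  have hB2P2 : B2 ≠ P2 := fun h => htri ⟨P2, hP2l1, by rw [← h]; exact hB2l2, hP2l3⟩
  have hB2P3 : B2 ≠ P3 :=
    fun h => hN2l1 (line_eq_line hP23.symm (by rw [← h]; exact hB2N2) hP2N2 hP3l1 hP2l1)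
  have hB3P1 : B3 ≠ P1 :=
    fun h => hN3l2 (line_eq_line hP13 (by rw [← h]; exact hB3N3) hP3N3 hP1l2 hP3l2)
  have hB3P2 : B3 ≠ P2 :=
    fun h => hN3l1 (line_eq_line hP23 (by rw [← h]; exact hB3N3) hP3N3 hP2l1 hP3l1)
  have hB3P3 : B3 ≠ P3 := fun h => htri ⟨P3, hP3l1, hP3l2, by rw [← h]; exact hB3l3⟩
  have hNN12 : N1 ≠ N2 :=
    fun h => hN1l3 (line_eq_line hP12 hP1N1 (by rw [h]; exact hP2N2) hP1l3 hP2l3)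
  have hNN13 : N1 ≠ N3 :=
    fun h => hN1l2 (line_eq_line hP13 hP1N1 (by rw [h]; exact hP3N3) hP1l2 hP3l2)
  have hNN23 : N2 ≠ N3 :=
    fun h => hN2l1 (line_eq_line hP23 hP2N2 (by rw [h]; exact hP3N3) hP2l1 hP3l1)
  have hB1B2 : B1 ≠ B2 := by
    intro h
    have hQm : Q = meet N1 N2 hNN12 := eq_meet hNN12 hQN1 hQN2
    have hBm : B1 = meet N1 N2 hNN12 := eq_meet hNN12 hB1N1 (by rw [h]; exact hB2N2)
    exact hQS ((hQm.trans hBm.symm) ▸ hB1S)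
  have hB1B3 : B1 ≠ B3 := by
    intro h
    have hQm : Q = meet N1 N3 hNN13 := eq_meet hNN13 hQN1 hQN3
    have hBm : B1 = meet N1 N3 hNN13 := eq_meet hNN13 hB1N1 (by rw [h]; exact hB3N3)
    exact hQS ((hQm.trans hBm.symm) ▸ hB1S)
  have hB2B3 : B2 ≠ B3 := by
    intro h
    have hQm : Q = meet N2 N3 hNN23 := eq_meet hNN23 hQN2 hQN3
    have hBm : B2 = meet N2 N3 hNN23 := eq_meet hNN23 hB2N2 (by rw [h]; exact hB3N3)
    exact hQS ((hQm.trans hBm.symm) ▸ hB2S)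
  -- points of S on a line other than the lᵢ
  have hsec : ∀ (M : PGLine F 2) (hM1 : M ≠ l₁) (hM2 : M ≠ l₂) (hM3 : M ≠ l₃),
      ∀ P ∈ S, P.1 ≤ M.1 → P = meet M l₁ hM1 ∨ P = meet M l₂ hM2 ∨ P = meet M l₃ hM3 := by
    rintro M hM1 hM2 hM3 P (h | h | h) hPM
    · exact Or.inl (eq_meet hM1 hPM h)
    · exact Or.inr (Or.inl (eq_meet hM2 hPM h))
    · exact Or.inr (Or.inr (eq_meet hM3 hPM h))
  -- the special set X
  set U : Set (PGPoint F 2) := {A | A.1 ≤ N1.1 ∨ A.1 ≤ N2.1 ∨ A.1 ≤ N3.1} with hUdef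
  set X : Set (PGPoint F 2) := S ∩ U with hXdef
  have hX : X = {P1, B1, P2, B2, P3, B3} := by
    ext C
    constructor
    · rintro ⟨hCS, hCU⟩
      rcases hCU with h | h | h
      · rcases hsec N1 hN1l1 hN1l2 hN1l3 C hCS h with h' | h' | h'
        · exact Or.inr (Or.inl h')
        · have h2 : P1 = meet N1 l₂ hN1l2 := eq_meet hN1l2 hP1N1 hP1l2
          exact Or.inl (h'.trans h2.symm)
        · have h2 : P1 = meet N1 l₃ hN1l3 := eq_meet hN1l3 hP1N1 hP1l3
          exact Or.inl (h'.trans h2.symm)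
      · rcases hsec N2 hN2l1 hN2l2 hN2l3 C hCS h with h' | h' | h'
        · have h2 : P2 = meet N2 l₁ hN2l1 := eq_meet hN2l1 hP2N2 hP2l1
          exact Or.inr (Or.inr (Or.inl (h'.trans h2.symm)))
        · exact Or.inr (Or.inr (Or.inr (Or.inl h')))
        · have h2 : P2 = meet N2 l₃ hN2l3 := eq_meet hN2l3 hP2N2 hP2l3
          exact Or.inr (Or.inr (Or.inl (h'.trans h2.symm)))
      · rcases hsec N3 hN3l1 hN3l2 hN3l3 C hCS h with h' | h' | h'
        · have h2 : P3 = meet N3 l₁ hN3l1 := eq_meet hN3l1 hP3N3 hP3l1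
          exact Or.inr (Or.inr (Or.inr (Or.inr (Or.inl (h'.trans h2.symm)))))
        · have h2 : P3 = meet N3 l₂ hN3l2 := eq_meet hN3l2 hP3N3 hP3l2
          exact Or.inr (Or.inr (Or.inr (Or.inr (Or.inl (h'.trans h2.symm)))))
        · exact Or.inr (Or.inr (Or.inr (Or.inr (Or.inr h'))))
    · rintro (rfl | rfl | rfl | rfl | rfl | rfl)
      · exact ⟨hP1S, Or.inl hP1N1⟩
      · exact ⟨hB1S, Or.inl hB1N1⟩
      · exact ⟨hP2S, Or.inr (Or.inl hP2N2)⟩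
      · exact ⟨hB2S, Or.inr (Or.inl hB2N2)⟩
      · exact ⟨hP3S, Or.inr (Or.inr hP3N3)⟩
      · exact ⟨hB3S, Or.inr (Or.inr hB3N3)⟩
  have hXcard : X.ncard = 6 := by
    rw [hX,
      Set.ncard_insert_of_notMem
        (by simp [hP12, hP13, hB1P1.symm, hB2P1.symm, hB3P1.symm]),
      Set.ncard_insert_of_notMem (by simp [hB1P2, hB1P3, hB1B2, hB1B3]),
      Set.ncard_insert_of_notMem (by simp [hP23, hB2P2.symm, hB3P2.symm]),
      Set.ncard_insert_of_notMem (by simp [hB2P3, hB2B3]),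
      Set.ncard_pair hB3P3.symm]
  -- ordered and unordered pair sets
  set O : Set (PGPoint F 2 × PGPoint F 2) :=
    {p | p.1 ∈ S ∧ p.2 ∈ S ∧ p.1 ≠ p.2 ∧ Q.1 ≤ p.1.1 ⊔ p.2.1} with hOdef
  set E : Set (Set (PGPoint F 2)) :=
    {e | ∃ A ∈ S, ∃ B ∈ S, A ≠ B ∧ e = {A, B} ∧ Q.1 ≤ A.1 ⊔ B.1} with hEdef
  have hOE : O.ncard = E.ncard * 2 := by
    refine ncard_eq_mul_of_fiber_const (Set.toFinite _) (Set.toFinite _)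
      (fun p => ({p.1, p.2} : Set (PGPoint F 2))) ?_ 2 ?_
    · rintro ⟨A, B⟩ ⟨hA, hB, hne, hle⟩
      exact ⟨A, hA, B, hB, hne, rfl, hle⟩
    · rintro e ⟨A, hA, B, hB, hne, rfl, hle⟩
      have he : {p ∈ O | ({p.1, p.2} : Set (PGPoint F 2)) = {A, B}}
          = {(A, B), (B, A)} := by
        ext p
        constructor
        · rintro ⟨⟨h1, h2, h3, h4⟩, hpair⟩
          rcases Set.pair_eq_pair_iff.1 hpair with ⟨hc, hd⟩ | ⟨hc, hd⟩
          · exact Or.inl (Prod.ext hc hd)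
          · exact Or.inr (Prod.ext hc hd)
        · rintro (rfl | rfl)
          · exact ⟨⟨hA, hB, hne, hle⟩, rfl⟩
          · exact ⟨⟨hB, hA, hne.symm, by rwa [sup_comm]⟩, Set.pair_comm _ _⟩
      rw [he, Set.ncard_pair (fun hc => hne (congrArg Prod.fst hc))]
  have hSfin : S.Finite := Set.toFinite _
  have hOsum : O.ncard = ∑ A ∈ hSfin.toFinset, {p ∈ O | p.1 = A}.ncard :=
    ncard_eq_sum_fiber (Set.toFinite _) hSfin Prod.fst (fun p hp => hp.1)
  -- the value of each fiber
  have hfib : ∀ A ∈ S, {p ∈ O | p.1 = A}.ncard = if A ∈ U then 1 else 2 := by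
    intro A hA
    have hQA : Q ≠ A := fun h => hQS (h ▸ hA)
    obtain ⟨M, hMdef⟩ : ∃ M : PGLine F 2, M = join Q A hQA := ⟨_, rfl⟩
    have hQM : Q.1 ≤ M.1 := by rw [hMdef]; exact le_join_left _
    have hAM : A.1 ≤ M.1 := by rw [hMdef]; exact le_join_right _
    have hMl1 : M ≠ l₁ := fun h => hQ1 (by rw [← h]; exact hQM)
    have hMl2 : M ≠ l₂ := fun h => hQ2 (by rw [← h]; exact hQM)
    have hMl3 : M ≠ l₃ := fun h => hQ3 (by rw [← h]; exact hQM)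
    obtain ⟨A1, hA1def⟩ : ∃ A1 : PGPoint F 2, A1 = meet M l₁ hMl1 := ⟨_, rfl⟩
    obtain ⟨A2, hA2def⟩ : ∃ A2 : PGPoint F 2, A2 = meet M l₂ hMl2 := ⟨_, rfl⟩
    obtain ⟨A3, hA3def⟩ : ∃ A3 : PGPoint F 2, A3 = meet M l₃ hMl3 := ⟨_, rfl⟩
    have hA1M : A1.1 ≤ M.1 := by rw [hA1def]; exact meet_le_left _
    have hA2M : A2.1 ≤ M.1 := by rw [hA2def]; exact meet_le_left _
    have hA3M : A3.1 ≤ M.1 := by rw [hA3def]; exact meet_le_left _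
    have hA1l : A1.1 ≤ l₁.1 := by rw [hA1def]; exact meet_le_right _
    have hA2l : A2.1 ≤ l₂.1 := by rw [hA2def]; exact meet_le_right _
    have hA3l : A3.1 ≤ l₃.1 := by rw [hA3def]; exact meet_le_right _
    have hA1S : A1 ∈ S := Or.inl hA1l
    have hA2S : A2 ∈ S := Or.inr (Or.inl hA2l)
    have hA3S : A3 ∈ S := Or.inr (Or.inr hA3l)
    have hsecM : ∀ P ∈ S, P.1 ≤ M.1 → P = A1 ∨ P = A2 ∨ P = A3 := by
      intro P hPS hPM
      rw [hA1def, hA2def, hA3def]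
      exact hsec M hMl1 hMl2 hMl3 P hPS hPM
    have hAmem : A = A1 ∨ A = A2 ∨ A = A3 := hsecM A hA hAM
    -- the fiber as an image
    have himg : {p ∈ O | p.1 = A} = (fun B => (A, B)) '' ({A1, A2, A3} \ {A}) := by
      ext p
      constructor
      · rintro ⟨⟨h1, h2, h3, h4⟩, h5⟩
        have hAp2 : A ≠ p.2 := fun h => h3 (by rw [h5, ← h])
        have h4' : Q.1 ≤ (join A p.2 hAp2).1 := by rw [h5] at h4; exact h4
        have hMB : M = join A p.2 hAp2 :=
          hMdef.trans (join_eq hQA h4' (le_join_left hAp2)).symm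
        have hp2M : p.2.1 ≤ M.1 := by rw [hMB]; exact le_join_right _
        refine ⟨p.2, ⟨hsecM p.2 h2 hp2M, fun hmem => hAp2 (Set.mem_singleton_iff.1 hmem).symm⟩, ?_⟩
        exact Prod.ext h5.symm rfl
      · rintro ⟨B, ⟨hBmem, hBA⟩, rfl⟩
        have hBne : B ≠ A := fun h => hBA (Set.mem_singleton_iff.2 h)
        have hBS : B ∈ S := by
          rcases hBmem with rfl | rfl | rfl
          exacts [hA1S, hA2S, hA3S]
        have hBM : B.1 ≤ M.1 := by
          rcases hBmem with rfl | rfl | rfl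
          exacts [hA1M, hA2M, hA3M]
        have hABne : A ≠ B := fun h => hBne h.symm
        have hMsup : M.1 = A.1 ⊔ B.1 := line_eq_sup hAM hBM hABne
        exact ⟨⟨hA, hBS, hABne, by rw [← hMsup]; exact hQM⟩, rfl⟩
    rw [himg, Set.ncard_image_of_injective _ (fun x y h => congrArg Prod.snd h)]
    by_cases hU : A ∈ U
    · rw [if_pos hU]
      rcases hU with h | h | h
      · -- M = N1, A2 = A3 = P1
        have hMN : M = N1 := hMdef.trans (join_eq hQA hQN1 h).symm
        have hP1M : P1.1 ≤ M.1 := by rw [hMN]; exact hP1N1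
        have hA2P : A2 = P1 := hA2def.trans (eq_meet hMl2 hP1M hP1l2).symm
        have hA3P : A3 = P1 := hA3def.trans (eq_meet hMl3 hP1M hP1l3).symm
        have hA1P : A1 ≠ P1 := fun h' => htri ⟨P1, by rw [← h']; exact hA1l, hP1l2, hP1l3⟩
        have hset : ({A1, A2, A3} : Set (PGPoint F 2)) = {A1, P1} := by
          rw [hA2P, hA3P]
          ext x
          constructor
          · rintro (h | h | h)
            exacts [Or.inl h, Or.inr h, Or.inr h]
          · rintro (h | h)
            exacts [Or.inl h, Or.inr (Or.inl h)]
        have hAmem' : A ∈ ({A1, P1} : Set (PGPoint F 2)) := by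
          rw [← hset]; rcases hAmem with h' | h' | h' <;> simp [h']
        rw [hset, Set.ncard_diff_singleton_of_mem hAmem', Set.ncard_pair hA1P]
      · -- M = N2, A1 = A3 = P2
        have hMN : M = N2 := hMdef.trans (join_eq hQA hQN2 h).symm
        have hP2M : P2.1 ≤ M.1 := by rw [hMN]; exact hP2N2
        have hA1P : A1 = P2 := hA1def.trans (eq_meet hMl1 hP2M hP2l1).symm
        have hA3P : A3 = P2 := hA3def.trans (eq_meet hMl3 hP2M hP2l3).symm
        have hA2P : A2 ≠ P2 := fun h' => htri ⟨P2, hP2l1, by rw [← h']; exact hA2l, hP2l3⟩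
        have hset : ({A1, A2, A3} : Set (PGPoint F 2)) = {A2, P2} := by
          rw [hA1P, hA3P]
          ext x
          constructor
          · rintro (h | h | h)
            exacts [Or.inr h, Or.inl h, Or.inr h]
          · rintro (h | h)
            exacts [Or.inr (Or.inl h), Or.inl h]
        have hAmem' : A ∈ ({A2, P2} : Set (PGPoint F 2)) := by
          rw [← hset]; rcases hAmem with h' | h' | h' <;> simp [h']
        rw [hset, Set.ncard_diff_singleton_of_mem hAmem', Set.ncard_pair hA2P]
      · -- M = N3, A1 = A2 = P3
        have hMN : M = N3 := hMdef.trans (join_eq hQA hQN3 h).symm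
        have hP3M : P3.1 ≤ M.1 := by rw [hMN]; exact hP3N3
        have hA1P : A1 = P3 := hA1def.trans (eq_meet hMl1 hP3M hP3l1).symm
        have hA2P : A2 = P3 := hA2def.trans (eq_meet hMl2 hP3M hP3l2).symm
        have hA3P : A3 ≠ P3 := fun h' => htri ⟨P3, hP3l1, hP3l2, by rw [← h']; exact hA3l⟩
        have hset : ({A1, A2, A3} : Set (PGPoint F 2)) = {A3, P3} := by
          rw [hA1P, hA2P]
          ext x
          constructor
          · rintro (h | h | h)
            exacts [Or.inr h, Or.inr h, Or.inl h]
          · rintro (h | h)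
            exacts [Or.inr (Or.inr h), Or.inl h]
        have hAmem' : A ∈ ({A3, P3} : Set (PGPoint F 2)) := by
          rw [← hset]; rcases hAmem with h' | h' | h' <;> simp [h']
        rw [hset, Set.ncard_diff_singleton_of_mem hAmem', Set.ncard_pair hA3P]
    · rw [if_neg hU]
      have hne12 : A1 ≠ A2 := by
        intro h
        have hP : A1 = P3 := eq_meet h12 hA1l (by rw [h]; exact hA2l)
        have hP3M : P3.1 ≤ M.1 := by rw [← hP]; exact hA1M
        have hMN : M = N3 := (join_eq hQP3 hQM hP3M).trans hN3def.symm
        exact hU (Or.inr (Or.inr (by rw [← hMN]; exact hAM)))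
      have hne13 : A1 ≠ A3 := by
        intro h
        have hP : A1 = P2 := eq_meet h13 hA1l (by rw [h]; exact hA3l)
        have hP2M : P2.1 ≤ M.1 := by rw [← hP]; exact hA1M
        have hMN : M = N2 := (join_eq hQP2 hQM hP2M).trans hN2def.symm
        exact hU (Or.inr (Or.inl (by rw [← hMN]; exact hAM)))
      have hne23 : A2 ≠ A3 := by
        intro h
        have hP : A2 = P1 := eq_meet h23 hA2l (by rw [h]; exact hA3l)
        have hP1M : P1.1 ≤ M.1 := by rw [← hP]; exact hA2M
        have hMN : M = N1 := (join_eq hQP1 hQM hP1M).trans hN1def.symm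
        exact hU (Or.inl (by rw [← hMN]; exact hAM))
      have hAmem' : A ∈ ({A1, A2, A3} : Set (PGPoint F 2)) := by
        rcases hAmem with h' | h' | h' <;> simp [h']
      rw [Set.ncard_diff_singleton_of_mem hAmem',
        Set.ncard_insert_of_notMem (by simp [hne12, hne13]), Set.ncard_pair hne23]
  -- assemble
  have hScard : S.ncard = 3 * q := S_ncard h12 h13 h23 htri
  have hXfin : X.Finite := Set.toFinite _
  have hfil : hSfin.toFinset.filter (fun A => A ∈ U) = hXfin.toFinset := by
    ext A
    simp only [Finset.mem_filter, Set.Finite.mem_toFinset, hXdef]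
    exact Iff.rfl
  have hfilcard :
      (hSfin.toFinset.filter (fun A => A ∈ U)).card
        + (hSfin.toFinset.filter (fun A => ¬ A ∈ U)).card = hSfin.toFinset.card :=
    Finset.card_filter_add_card_filter_not _
  have hc1 : (hSfin.toFinset.filter (fun A => A ∈ U)).card = 6 := by
    rw [hfil, ← Set.ncard_eq_toFinset_card _ hXfin, hXcard]
  have hcS : hSfin.toFinset.card = 3 * q := by
    rw [← Set.ncard_eq_toFinset_card _ hSfin, hScard]
  have hOval : O.ncard = 6 * 1 + (3 * q - 6) * 2 := by
    rw [hOsum, Finset.sum_congr rfl (fun A hAm => hfib A (hSfin.mem_toFinset.1 hAm)),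
      Finset.sum_ite, Finset.sum_const, Finset.sum_const, smul_eq_mul, smul_eq_mul, hc1]
    have : (hSfin.toFinset.filter (fun A => ¬ A ∈ U)).card = 3 * q - 6 := by omega
    rw [this]
  have hfinal : pairCount S Q = E.ncard := rfl
  rw [hfinal]
  omega

end PairCount

set_option maxHeartbeats 1000000 in
/-- Let `ℓ₁, ℓ₂, ℓ₃` be three distinct lines of `PG(2,q)` not
all through a common point (a triangle), and `S = ℓ₁ ∪ ℓ₂ ∪ ℓ₃`. Then
`#S = 3q`, and every point `Q ∉ S` lies on exactly `3(q−1)` unordered pairs of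
distinct points of `S` collinear with `Q`; hence `S` is a `(1, 3(q−1))`-OS set. -/
theorem stmt_19 (F : Type) [Field F] [Fintype F] (q : ℕ)
    (hq : Fintype.card F = q)
    (l₁ l₂ l₃ : PGLine F 2) (h12 : l₁ ≠ l₂) (h13 : l₁ ≠ l₃) (h23 : l₂ ≠ l₃)
    (htri : ¬ ∃ G : PGPoint F 2, G.1 ≤ l₁.1 ∧ G.1 ≤ l₂.1 ∧ G.1 ≤ l₃.1)
    (S : Set (PGPoint F 2))
    (hS : S = {P : PGPoint F 2 | P.1 ≤ l₁.1 ∨ P.1 ≤ l₂.1 ∨ P.1 ≤ l₃.1}) :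
    S.ncard = 3 * q ∧
    (∀ Q : PGPoint F 2, Q ∉ S → pairCount S Q = 3 * (q - 1)) ∧
    IsOS S (3 * (q - 1)) := by
  classical
  subst hS
  subst hq
  have hq2 : 2 ≤ Fintype.card F := Fintype.one_lt_card
  have hcard := S_ncard h12 h13 h23 htri
  have hpc : ∀ Q : PGPoint F 2,
      Q ∉ {P : PGPoint F 2 | P.1 ≤ l₁.1 ∨ P.1 ≤ l₂.1 ∨ P.1 ≤ l₃.1} →
      pairCount {P : PGPoint F 2 | P.1 ≤ l₁.1 ∨ P.1 ≤ l₂.1 ∨ P.1 ≤ l₃.1} Q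
        = 3 * (Fintype.card F - 1) := by
    intro Q hQ
    simp only [Set.mem_setOf_eq, not_or] at hQ
    exact pair_count_eq l₁ l₂ l₃ h12 h13 h23 htri hQ.1 hQ.2.1 hQ.2.2
  have hspan : Spans {P : PGPoint F 2 | P.1 ≤ l₁.1 ∨ P.1 ≤ l₂.1 ∨ P.1 ≤ l₃.1} := by
    show (⨆ P ∈ {P : PGPoint F 2 | P.1 ≤ l₁.1 ∨ P.1 ≤ l₂.1 ∨ P.1 ≤ l₃.1}, P.1) = ⊤
    rw [eq_top_iff, ← sup_lines_eq_top h12]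
    exact sup_le (line_le_iSup fun P hP => Or.inl hP)
      (line_le_iSup fun P hP => Or.inr (Or.inl hP))
  have hnuniv : {P : PGPoint F 2 | P.1 ≤ l₁.1 ∨ P.1 ≤ l₂.1 ∨ P.1 ≤ l₃.1} ≠ Set.univ := by
    intro huniv
    have hsub : ¬ ({P : PGPoint F 2 | P.1 ≤ l₁.1} ⊆ {meet l₁ l₂ h12, meet l₁ l₃ h13}) := by
      intro hsub
      have h1 := Set.ncard_le_ncard hsub (Set.toFinite _)
      rw [card_points_on_line l₁] at h1
      have h2 : ({meet l₁ l₂ h12, meet l₁ l₃ h13} : Set (PGPoint F 2)).ncard ≤ 2 :=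
        le_trans (Set.ncard_insert_le _ _) (by simp)
      omega
    obtain ⟨B, hBl1, hBP⟩ := Set.not_subset.1 hsub
    have hBP3 : B ≠ meet l₁ l₂ h12 := fun h => hBP (Or.inl h)
    have hBP2 : B ≠ meet l₁ l₃ h13 := fun h => hBP (Or.inr h)
    have hBl2 : ¬ B.1 ≤ l₂.1 := fun h => hBP3 (eq_meet h12 hBl1 h)
    have hBl3 : ¬ B.1 ≤ l₃.1 := fun h => hBP2 (eq_meet h13 hBl1 h)
    have hBP1 : B ≠ meet l₂ l₃ h23 := fun h => hBl2 (by rw [h]; exact meet_le_left _)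
    obtain ⟨M, hMdef⟩ : ∃ M : PGLine F 2, M = join B (meet l₂ l₃ h23) hBP1 := ⟨_, rfl⟩
    have hBM : B.1 ≤ M.1 := by rw [hMdef]; exact le_join_left _
    have hP1M : (meet l₂ l₃ h23).1 ≤ M.1 := by rw [hMdef]; exact le_join_right _
    have hMl1 : M ≠ l₁ := fun h =>
      htri ⟨meet l₂ l₃ h23, by rw [← h]; exact hP1M, meet_le_left _, meet_le_right _⟩
    have hMl2 : M ≠ l₂ := fun h => hBl2 (by rw [← h]; exact hBM)
    have hMl3 : M ≠ l₃ := fun h => hBl3 (by rw [← h]; exact hBM)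
    have hsub2 : {P : PGPoint F 2 | P.1 ≤ M.1} ⊆ {B, meet l₂ l₃ h23} := by
      intro C hC
      have hCS : C ∈ {P : PGPoint F 2 | P.1 ≤ l₁.1 ∨ P.1 ≤ l₂.1 ∨ P.1 ≤ l₃.1} := by
        rw [huniv]; trivial
      rcases hCS with h | h | h
      · exact Or.inl ((eq_meet hMl1 hC h).trans (eq_meet hMl1 hBM hBl1).symm)
      · exact Or.inr ((eq_meet hMl2 hC h).trans (eq_meet hMl2 hP1M (meet_le_left _)).symm)
      · exact Or.inr ((eq_meet hMl3 hC h).trans (eq_meet hMl3 hP1M (meet_le_right _)).symm)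
    have h1 := Set.ncard_le_ncard hsub2 (Set.toFinite _)
    rw [card_points_on_line M, Set.ncard_pair hBP1] at h1
    omega
  exact ⟨hcard, hpc, hspan, hnuniv, hpc⟩
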